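/- arXiv:2111.04704 — 6 statements merged into one kernel-verified Lean document; each statement's English description precedes it below -/
import Mathlib

section
/- Let H ∈ ℝ^{n_y×n_x} have full row rank (rank H = n_y), so that HHᵀ is invertible, and set H† = Hᵀ(HHᵀ)⁻¹. Let κ > 0, let x ∈ ℝ^{n_x} satisfy ‖x‖_∞ ≤ κ, let γ ∈ ℝ^{n_y} belong to the zonotope ⟨c_γ, G_γ⟩ with c_γ ∈ ℝ^{n_y} and G_γ ∈ ℝ^{n_y×ξ_γ}, and let z = H x + γ. Then x belongs to the zonotope ⟨c_{x|z}, G_{x|z}⟩ with center c_{x|z} = H†(z − c_γ) and generator matrix G_{x|z} = [ H† G_γ , κ(I_{n_x} − H† H) ] (horizontal concatenation). -/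
open Matrix

/-!
Write `A = Hᵀ(HHᵀ)⁻¹`. Since `z - c_γ = H x + (γ - c_γ)`, the vector `x` splits as
`x = A (z - c_γ) + A (c_γ - γ) + (I - A H) x`. The second summand lies in the zonotope
`⟨0, A G_γ⟩` (`c_γ - γ ∈ ⟨0, G_γ⟩` by symmetry, and linear images of zonotopes are zonotopes),
the third in `⟨0, κ (I - A H)⟩` because `x` lies in the box `⟨0, κ I⟩`, and the Minkowski sum
of two zonotopes is the zonotope generated by the concatenated generators.
-/

def zonotope {m ι : Type*} [Fintype ι] (c : m → ℝ) (G : Matrix m ι ℝ) : Set (m → ℝ) :=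
  {v | ∃ β : ι → ℝ, (∀ i, |β i| ≤ 1) ∧ v = c + G *ᵥ β}

section Zonotope

variable {m p ι ι' : Type*} [Fintype ι] [Fintype ι']

theorem add_mem_zonotope_add {c v : m → ℝ} {G : Matrix m ι ℝ} (a : m → ℝ)
    (hv : v ∈ zonotope c G) : a + v ∈ zonotope (a + c) G := by
  obtain ⟨β, hβ, rfl⟩ := hv
  exact ⟨β, hβ, by rw [add_assoc]⟩

theorem sub_mem_zonotope_zero {c v : m → ℝ} {G : Matrix m ι ℝ}
    (hv : v ∈ zonotope c G) : c - v ∈ zonotope 0 G := by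
  obtain ⟨β, hβ, rfl⟩ := hv
  refine ⟨-β, fun i => by simpa using hβ i, ?_⟩
  rw [mulVec_neg]
  abel

theorem mulVec_mem_zonotope [Fintype m] {c v : m → ℝ} {G : Matrix m ι ℝ}
    (M : Matrix p m ℝ) (hv : v ∈ zonotope c G) : M *ᵥ v ∈ zonotope (M *ᵥ c) (M * G) := by
  obtain ⟨β, hβ, rfl⟩ := hv
  exact ⟨β, hβ, by rw [mulVec_add, mulVec_mulVec]⟩

theorem add_mem_zonotope_fromCols {c d u v : m → ℝ} {G : Matrix m ι ℝ} {K : Matrix m ι' ℝ}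
    (hu : u ∈ zonotope c G) (hv : v ∈ zonotope d K) :
    u + v ∈ zonotope (c + d) (fromCols G K) := by
  obtain ⟨β, hβ, rfl⟩ := hu
  obtain ⟨β', hβ', rfl⟩ := hv
  refine ⟨Sum.elim β β', fun i => i.rec hβ hβ', ?_⟩
  rw [fromCols_mulVec_sumElim]
  abel

theorem mem_zonotope_smul_one [Fintype m] [DecidableEq m] {κ : ℝ} (hκ : 0 < κ) {x : m → ℝ}
    (hx : ∀ j, |x j| ≤ κ) : x ∈ zonotope 0 (κ • (1 : Matrix m m ℝ)) := by
  refine ⟨κ⁻¹ • x, fun j => ?_, ?_⟩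
  · rw [Pi.smul_apply, smul_eq_mul, abs_mul, abs_inv, abs_of_pos hκ, inv_mul_le_one₀ hκ]
    exact hx j
  · rw [zero_add, smul_mulVec, one_mulVec, smul_smul, mul_inv_cancel₀ hκ.ne', one_smul]

end Zonotope

theorem stmt_0_general {nx ny ξγ : ℕ}
    (H : Matrix (Fin ny) (Fin nx) ℝ)
    (κ : ℝ) (hκ : 0 < κ)
    (x : Fin nx → ℝ) (hx : ∀ j, |x j| ≤ κ)
    (cγ : Fin ny → ℝ) (Gγ : Matrix (Fin ny) (Fin ξγ) ℝ)
    (γ : Fin ny → ℝ)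
    (hγ : ∃ βγ : Fin ξγ → ℝ, (∀ i, |βγ i| ≤ 1) ∧ γ = cγ + Gγ.mulVec βγ)
    (z : Fin ny → ℝ) (hz : z = H.mulVec x + γ) :
    ∃ β : Fin ξγ ⊕ Fin nx → ℝ, (∀ i, |β i| ≤ 1) ∧
      x = (Hᵀ * (H * Hᵀ)⁻¹).mulVec (z - cγ) +
        (Matrix.fromCols ((Hᵀ * (H * Hᵀ)⁻¹) * Gγ)
          (κ • ((1 : Matrix (Fin nx) (Fin nx) ℝ) - (Hᵀ * (H * Hᵀ)⁻¹) * H))).mulVec β := by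
  set A := Hᵀ * (H * Hᵀ)⁻¹
  have hnoise : A *ᵥ (cγ - γ) ∈ zonotope 0 (A * Gγ) := by
    simpa using mulVec_mem_zonotope A (sub_mem_zonotope_zero hγ)
  have hbox : (1 - A * H) *ᵥ x ∈ zonotope 0 (κ • (1 - A * H)) := by
    simpa using mulVec_mem_zonotope (1 - A * H) (mem_zonotope_smul_one hκ hx)
  have hdecomp : x = A *ᵥ (z - cγ) + (A *ᵥ (cγ - γ) + (1 - A * H) *ᵥ x) := by
    rw [hz, mulVec_sub, mulVec_sub, mulVec_add, sub_mulVec, one_mulVec, mulVec_mulVec]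
    abel
  have hmem := add_mem_zonotope_add (A *ᵥ (z - cγ)) (add_mem_zonotope_fromCols hnoise hbox)
  rw [add_zero, add_zero, ← hdecomp] at hmem
  exact hmem

/-- If `H` has full row rank and `x` satisfies `‖x‖_∞ ≤ κ`,
`γ` lies in the zonotope `⟨cγ, Gγ⟩` and `z = H x + γ`, then `x` lies in the
zonotope with center `H†(z − cγ)` and generators `[H† Gγ, κ(I − H† H)]`,
where `H† = Hᵀ(HHᵀ)⁻¹`. -/
theorem stmt_0 {nx ny ξγ : ℕ}
    (H : Matrix (Fin ny) (Fin nx) ℝ) (hrank : H.rank = ny)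
    (κ : ℝ) (hκ : 0 < κ)
    (x : Fin nx → ℝ) (hx : ∀ j, |x j| ≤ κ)
    (cγ : Fin ny → ℝ) (Gγ : Matrix (Fin ny) (Fin ξγ) ℝ)
    (γ : Fin ny → ℝ)
    (hγ : ∃ βγ : Fin ξγ → ℝ, (∀ i, |βγ i| ≤ 1) ∧ γ = cγ + Gγ.mulVec βγ)
    (z : Fin ny → ℝ) (hz : z = H.mulVec x + γ) :
    ∃ β : Fin ξγ ⊕ Fin nx → ℝ, (∀ i, |β i| ≤ 1) ∧
      x = (Hᵀ * (H * Hᵀ)⁻¹).mulVec (z - cγ) +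
        (Matrix.fromCols ((Hᵀ * (H * Hᵀ)⁻¹) * Gγ)
          (κ • ((1 : Matrix (Fin nx) (Fin nx) ℝ) - (Hᵀ * (H * Hᵀ)⁻¹) * H))).mulVec β :=
  stmt_0_general H κ hκ x hx cγ Gγ γ hγ z hz
end

section
/- Let H ∈ ℝ^{n_y×n_x} have full row rank (rank H = n_y), so that HHᵀ is invertible, and set H† = Hᵀ(HHᵀ)⁻¹. Let κ > 0 and let x(1), …, x(T) ∈ ℝ^{n_x} satisfy ‖x(k)‖_∞ ≤ κ for all k. Let γ(1), …, γ(T) belong to the zonotope ⟨c_γ, G_γ⟩ ⊂ ℝ^{n_y} with generators g_γ^{(1)}, …, g_γ^{(ξ_γ)}, and let z(k) = H x(k) + γ(k). Form X⁺ = [x(1) ⋯ x(T)] ∈ ℝ^{n_x×T}, Z⁺ = [z(1) ⋯ z(T)], and C_γ = [c_γ ⋯ c_γ] ∈ ℝ^{n_y×T}. Then X⁺ belongs to the matrix zonotope with center H†(Z⁺ − C_γ) and generator matrices consisting of: (i) the matrices H† g_γ^{(i)} e_jᵀ for i = 1,…,ξ_γ and j = 1,…,T (i.e., H† g_γ^{(i)}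 placed in column j and zeros elsewhere), and (ii) the matrices κ (I_{n_x} − H† H) e_l e_jᵀ for l = 1,…,n_x and j = 1,…,T, where e_j denotes the j-th standard basis vector of the appropriate dimension. -/
/-!
With `M = Hᵀ(HHᵀ)⁻¹`, split `X⁺ = M H X⁺ + (I - M H) X⁺`. Collecting the noise coefficients of
`γ(k) = c_γ + G_γ β(k)` as the columns of `B`, the measurements give `Z⁺ - C_γ = H X⁺ + G_γ B`,
so `M H X⁺ = M (Z⁺ - C_γ) + (M G_γ)(-B)`, while `(I - M H) X⁺ = κ(I - M H)(κ⁻¹ X⁺)`. Expanding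
`V C = ∑ C_ij (V e_i) e_jᵀ`, the entries of `-B` and `κ⁻¹ X⁺`, all in `[-1, 1]`, are the zonotope
coefficients.
-/

open Matrix

section Scaling

variable {a κ : ℝ}

lemma abs_inv_mul_le_one_of_abs_le (h : |a| ≤ κ) : |κ⁻¹ * a| ≤ 1 := by
  have hκ : 0 ≤ κ := (abs_nonneg a).trans h
  rw [abs_mul, abs_inv, abs_of_nonneg hκ, inv_mul_eq_div]
  exact div_le_one_of_le₀ h hκ

lemma Matrix.smul_inv_smul_of_abs_le {m n : Type*} {X : Matrix m n ℝ}
    (h : ∀ i j, |X i j| ≤ κ) : κ • κ⁻¹ • X = X := by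
  rcases eq_or_ne κ 0 with rfl | hκ
  · ext i j
    simpa [eq_comm] using h i j
  · exact smul_inv_smul₀ hκ X

end Scaling

section ColumnGenerators

variable {R m n : Type*} [CommSemiring R]

lemma Matrix.sum_smul_vecMulVec_single {o : Type*} [Fintype n] [Fintype o] [DecidableEq o]
    (v : n → m → R) (b : n → o → R) :
    ∑ p : n × o, b p.1 p.2 • vecMulVec (v p.1) (Pi.single p.2 1) =
      of (fun l i => v i l) * of b := by
  ext l k
  simp [Matrix.sum_apply, Fintype.sum_prod_type, vecMulVec_apply, Pi.single_apply, mul_apply,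
    mul_comm]

lemma Matrix.of_mulVec_single_one_eq [Fintype n] [DecidableEq n] (A : Matrix m n R) :
    of (fun l i => (A *ᵥ Pi.single i 1) l) = A := by
  ext l i
  simp

lemma Matrix.of_mulVec_column_eq_mul {p : Type*} [Fintype p] (M : Matrix m p R)
    (G : Matrix p n R) : of (fun l i => (M *ᵥ fun r => G r i) l) = M * G := by
  ext l i
  simp [mul_apply, mulVec, dotProduct]

end ColumnGenerators

lemma of_mulVec_add_sub_center {R m n p o : Type*} [CommRing R] [Fintype n] [Fintype p]
    (H : Matrix m n R) (G : Matrix m p R) (c : m → R) (x : o → n → R) (β : o → p → R) :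
    of (fun l k => (H *ᵥ x k + (c + G *ᵥ β k)) l) - of (fun l (_ : o) => c l) =
      H * of (fun l k => x k l) + G * of (fun i k => β k i) := by
  ext l k
  simp [mul_apply, mulVec, dotProduct]
  ring

theorem stmt_1_general {nx ny ξγ T : ℕ}
    (H : Matrix (Fin ny) (Fin nx) ℝ)
    (κ : ℝ)
    (x : Fin T → Fin nx → ℝ) (hx : ∀ k, ∀ j, |x k j| ≤ κ)
    (cγ : Fin ny → ℝ) (Gγ : Matrix (Fin ny) (Fin ξγ) ℝ)
    (γ : Fin T → Fin ny → ℝ)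
    (hγ : ∀ k, ∃ βγ : Fin ξγ → ℝ, (∀ i, |βγ i| ≤ 1) ∧ γ k = cγ + Gγ.mulVec βγ)
    (z : Fin T → Fin ny → ℝ) (hz : ∀ k, z k = H.mulVec (x k) + γ k)
    (Xp : Matrix (Fin nx) (Fin T) ℝ) (Zp Cγ : Matrix (Fin ny) (Fin T) ℝ)
    (hXp : Xp = Matrix.of fun l k => x k l)
    (hZp : Zp = Matrix.of fun l k => z k l)
    (hCγ : Cγ = Matrix.of fun l _ => cγ l) :
    ∃ β : (Fin ξγ × Fin T) ⊕ (Fin nx × Fin T) → ℝ, (∀ i, |β i| ≤ 1) ∧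
      Xp = (Hᵀ * (H * Hᵀ)⁻¹) * (Zp - Cγ) +
        ∑ i : (Fin ξγ × Fin T) ⊕ (Fin nx × Fin T), β i •
          (Sum.elim
            (fun p : Fin ξγ × Fin T =>
              Matrix.vecMulVec ((Hᵀ * (H * Hᵀ)⁻¹).mulVec (fun l => Gγ l p.1))
                (Pi.single p.2 1))
            (fun p : Fin nx × Fin T =>
              Matrix.vecMulVec
                (κ • ((1 : Matrix (Fin nx) (Fin nx) ℝ) -
                  (Hᵀ * (H * Hᵀ)⁻¹) * H).mulVec (Pi.single p.1 1))
                (Pi.single p.2 1)) i) := by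
  choose βγ hβγ hγ using hγ
  set M := Hᵀ * (H * Hᵀ)⁻¹
  set B : Matrix (Fin ξγ) (Fin T) ℝ := of fun i k => βγ k i
  have hZC : Zp - Cγ = H * Xp + Gγ * B := by
    simp only [hZp, hCγ, hXp, hz, hγ, B]
    exact of_mulVec_add_sub_center H Gγ cγ x βγ
  have hXκ : κ • κ⁻¹ • Xp = Xp := smul_inv_smul_of_abs_le fun l k => by simpa [hXp] using hx k l
  refine ⟨Sum.elim (fun p => -βγ p.2 p.1) (fun p => κ⁻¹ * x p.2 p.1), ?_, ?_⟩
  · rintro (⟨i, k⟩ | ⟨l, k⟩)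
    · simpa using hβγ k i
    · exact abs_inv_mul_le_one_of_abs_le (hx k l)
  · simp only [Fintype.sum_sum_type, Sum.elim_inl, Sum.elim_inr, ← smul_mulVec]
    rw [sum_smul_vecMulVec_single (fun i => M *ᵥ fun l => Gγ l i) (fun i k => -βγ k i),
      sum_smul_vecMulVec_single (fun l => (κ • (1 - M * H)) *ᵥ Pi.single l 1)
        (fun l k => κ⁻¹ * x k l), of_mulVec_column_eq_mul,
      of_mulVec_single_one_eq (κ • (1 - M * H)), hZC]
    have hB : (of fun i k => -βγ k i) = -B := rfl
    have hX : (of fun l k => κ⁻¹ * x k l) = κ⁻¹ • Xp := by rw [hXp]; rfl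
    rw [hB, hX, Matrix.smul_mul, ← Matrix.mul_smul, hXκ]
    clear_value M
    rw [Matrix.mul_add, Matrix.mul_neg, Matrix.sub_mul, Matrix.one_mul, Matrix.mul_assoc,
      Matrix.mul_assoc]
    abel

/-- The unknown state sequence `X⁺` is contained in the matrix
zonotope with center `H†(Z⁺ − Cγ)` and generators `H† gγ^{(i)} e_jᵀ` and
`κ(I − H†H) e_l e_jᵀ`. -/
theorem stmt_1 {nx ny ξγ T : ℕ}
    (H : Matrix (Fin ny) (Fin nx) ℝ) (hrank : H.rank = ny)
    (κ : ℝ) (hκ : 0 < κ)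
    (x : Fin T → Fin nx → ℝ) (hx : ∀ k, ∀ j, |x k j| ≤ κ)
    (cγ : Fin ny → ℝ) (Gγ : Matrix (Fin ny) (Fin ξγ) ℝ)
    (γ : Fin T → Fin ny → ℝ)
    (hγ : ∀ k, ∃ βγ : Fin ξγ → ℝ, (∀ i, |βγ i| ≤ 1) ∧ γ k = cγ + Gγ.mulVec βγ)
    (z : Fin T → Fin ny → ℝ) (hz : ∀ k, z k = H.mulVec (x k) + γ k)
    (Xp : Matrix (Fin nx) (Fin T) ℝ) (Zp Cγ : Matrix (Fin ny) (Fin T) ℝ)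
    (hXp : Xp = Matrix.of fun l k => x k l)
    (hZp : Zp = Matrix.of fun l k => z k l)
    (hCγ : Cγ = Matrix.of fun l _ => cγ l) :
    ∃ β : (Fin ξγ × Fin T) ⊕ (Fin nx × Fin T) → ℝ, (∀ i, |β i| ≤ 1) ∧
      Xp = (Hᵀ * (H * Hᵀ)⁻¹) * (Zp - Cγ) +
        ∑ i : (Fin ξγ × Fin T) ⊕ (Fin nx × Fin T), β i •
          (Sum.elim
            (fun p : Fin ξγ × Fin T =>
              Matrix.vecMulVec ((Hᵀ * (H * Hᵀ)⁻¹).mulVec (fun l => Gγ l p.1))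
                (Pi.single p.2 1))
            (fun p : Fin nx × Fin T =>
              Matrix.vecMulVec
                (κ • ((1 : Matrix (Fin nx) (Fin nx) ℝ) -
                  (Hᵀ * (H * Hᵀ)⁻¹) * H).mulVec (Pi.single p.1 1))
                (Pi.single p.2 1)) i) :=
  stmt_1_general H κ x hx cγ Gγ γ hγ z hz Xp Zp Cγ hXp hZp hCγ
end

section
/- Let M⁺ = ⟨C⁺, {G⁺^{(1)}, …, G⁺^{(ξ⁺)}}⟩ and M_w = ⟨C_w, {G_w^{(1)}, …, G_w^{(ξ_w)}}⟩ be matrix zonotopes in ℝ^{n_x×T}. Let Ω ∈ ℝ^{m×T} have full row rank (rank Ω = m), so ΩΩᵀ is invertible, and set Ω† = Ωᵀ(ΩΩᵀ)⁻¹. Suppose Θ ∈ ℝ^{n_x×m} and W ∈ M_w are such that ΘΩ + W ∈ M⁺. Then Θ belongs to the matrix zonotope with center (C⁺ − C_w)Ω† and generator matrices {G⁺^{(1)}Ω†, …, G⁺^{(ξ⁺)}Ω†, −G_w^{(1)}Ω†, …, −G_w^{(ξ_w)}Ω†}, i.e., Θ ∈ (M⁺ − M_w)Ω† = {(A − B)Ω†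 : A ∈ M⁺, B ∈ M_w}. -/
open Matrix

lemma aux_isUnit {m : ℕ} (A : Matrix (Fin m) (Fin m) ℝ) (h : A.rank = m) : IsUnit A := by
  rw [← Matrix.mulVec_surjective_iff_isUnit]
  have : LinearMap.range A.mulVecLin = ⊤ := by
    apply Submodule.eq_top_of_finrank_eq
    rw [← Matrix.rank, h]
    simp [Module.finrank_fintype_fun_eq_card]
  exact LinearMap.range_eq_top.mp this

/-- If `ΘΩ + W ∈ M⁺` with `W ∈ M_w` and `Ω` has full row rank,
then `Θ ∈ (M⁺ − M_w)Ω†`, the matrix zonotope with center `(C⁺ − C_w)Ω†` and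
generators `G⁺^{(i)}Ω†` and `−G_w^{(i)}Ω†`, where `Ω† = Ωᵀ(ΩΩᵀ)⁻¹`. -/
theorem stmt_2 {nx T m ξp ξw : ℕ}
    (Cp : Matrix (Fin nx) (Fin T) ℝ) (Gp : Fin ξp → Matrix (Fin nx) (Fin T) ℝ)
    (Cw : Matrix (Fin nx) (Fin T) ℝ) (Gw : Fin ξw → Matrix (Fin nx) (Fin T) ℝ)
    (Ω : Matrix (Fin m) (Fin T) ℝ) (hrank : Ω.rank = m)
    (Θ : Matrix (Fin nx) (Fin m) ℝ) (W : Matrix (Fin nx) (Fin T) ℝ)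
    (hW : ∃ βw : Fin ξw → ℝ, (∀ i, |βw i| ≤ 1) ∧ W = Cw + ∑ i, βw i • Gw i)
    (hin : ∃ βp : Fin ξp → ℝ, (∀ i, |βp i| ≤ 1) ∧ Θ * Ω + W = Cp + ∑ i, βp i • Gp i) :
    ∃ β : Fin ξp ⊕ Fin ξw → ℝ, (∀ i, |β i| ≤ 1) ∧
      Θ = (Cp - Cw) * (Ωᵀ * (Ω * Ωᵀ)⁻¹) +
        ∑ i : Fin ξp ⊕ Fin ξw, β i •
          (Sum.elim (fun i => Gp i * (Ωᵀ * (Ω * Ωᵀ)⁻¹))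
            (fun i => -(Gw i * (Ωᵀ * (Ω * Ωᵀ)⁻¹))) i) := by
  obtain ⟨βw, hβw, hWeq⟩ := hW
  obtain ⟨βp, hβp, heq⟩ := hin
  have hunit : IsUnit (Ω * Ωᵀ) := by
    apply aux_isUnit
    rw [Matrix.rank_self_mul_transpose, hrank]
  have hinv : Ω * (Ωᵀ * (Ω * Ωᵀ)⁻¹) = 1 := by
    rw [← Matrix.mul_assoc, Matrix.mul_nonsing_inv _ ((Matrix.isUnit_iff_isUnit_det _).mp hunit)]
  set P := Ωᵀ * (Ω * Ωᵀ)⁻¹ with hP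
  refine ⟨Sum.elim βp βw, fun i => by cases i <;> simp [hβp, hβw], ?_⟩
  have hΘΩ : Θ * Ω = (Cp - Cw) + (∑ i, βp i • Gp i - ∑ i, βw i • Gw i) := by
    have := heq
    rw [hWeq] at this
    abel_nf
    abel_nf at this
    linear_combination (norm := abel) this
  calc Θ = Θ * Ω * P := by rw [Matrix.mul_assoc, hinv, Matrix.mul_one]
    _ = (Cp - Cw) * P + ∑ i : Fin ξp ⊕ Fin ξw, Sum.elim βp βw i •
          (Sum.elim (fun i => Gp i * P) (fun i => -(Gw i * P)) i) := by
        rw [hΘΩ, Matrix.add_mul, Fintype.sum_sum_type]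
        simp only [Sum.elim_inl, Sum.elim_inr, sub_eq_add_neg, Matrix.add_mul,
          Matrix.neg_mul, Matrix.sum_mul, Matrix.smul_mul, smul_neg, Finset.sum_neg_distrib]
end

section
/- Let R̃ = ⟨c̃, G̃, Ã, b̃⟩ be a constrained zonotope in ℝ^{n_x} with G̃ ∈ ℝ^{n_x×ξ̃}, Ã ∈ ℝ^{ñ_c×ξ̃}, b̃ ∈ ℝ^{ñ_c}. Let H ∈ ℝ^{n_y×n_x}, y ∈ ℝ^{n_y}, and let Z_v = ⟨c_v, G_v⟩ be a zonotope in ℝ^{n_y} with G_v ∈ ℝ^{n_y×ξ_v}. Then the set {x ∈ R̃ : ∃ v ∈ Z_v, y = Hx + v} is equal to the constrained zonotope ⟨ĉ, Ĝ, Â, b̂⟩ where ĉ = c̃, Ĝ = [G̃, 0_{n_x×ξ_v}], Â = [ Ã , 0_{ñ_c×ξ_v} ; H G̃ , G_v ] (block matrix), and b̂ = [ b̃ ; y − H c̃ − c_v ]. -/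
/-!
Write the factor of the new constrained zonotope as `Sum.elim β βv`. Then `[G̃ 0]` only sees `β`,
the first block row of the constraint is `Ãβ = b̃`, and the second is the measurement equation
`y = H(c̃ + G̃β) + (c_v + G_v βv)` with its known terms moved to the right-hand side.
-/

open Matrix

theorem Sum.exists_elim {α β γ : Type*} {p : (α ⊕ β → γ) → Prop} :
    (∃ f, p f) ↔ ∃ u v, p (Sum.elim u v) :=
  ⟨fun ⟨f, hf⟩ => ⟨f ∘ Sum.inl, f ∘ Sum.inr, by rwa [Sum.elim_comp_inl_inr]⟩,
    fun ⟨u, v, h⟩ => ⟨Sum.elim u v, h⟩⟩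

namespace Matrix

variable {m n p q R : Type*} [Fintype n] [Fintype p]

theorem fromBlocks_zero₁₂_mulVec_sumElim [NonUnitalNonAssocSemiring R] (A : Matrix m n R)
    (C : Matrix q n R) (D : Matrix q p R) (u : n → R) (v : p → R) :
    fromBlocks A 0 C D *ᵥ Sum.elim u v = Sum.elim (A *ᵥ u) (C *ᵥ u + D *ᵥ v) := by
  rw [fromBlocks_mulVec, Sum.elim_comp_inl, Sum.elim_comp_inr, zero_mulVec, add_zero]

theorem fromCols_zero_mulVec_sumElim [Semiring R] (G : Matrix m n R) (u : n → R) (v : p → R) :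
    fromCols G (0 : Matrix m p R) *ᵥ Sum.elim u v = G *ᵥ u := by
  rw [fromCols_mulVec_sumElim, zero_mulVec, add_zero]

end Matrix

theorem measurement_eq_iff_constraint {nx ny ξ ξv R : Type*} [Fintype nx] [Fintype ξ]
    [Fintype ξv] [Ring R] (H : Matrix ny nx R) (y : ny → R) (c : nx → R) (G : Matrix nx ξ R)
    (cv : ny → R) (Gv : Matrix ny ξv R) (β : ξ → R) (βv : ξv → R) :
    y = H *ᵥ (c + G *ᵥ β) + (cv + Gv *ᵥ βv) ↔ (H * G) *ᵥ β + Gv *ᵥ βv = y - H *ᵥ c - cv := by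
  rw [sub_sub, eq_sub_iff_add_eq, mulVec_add, mulVec_mulVec]
  constructor <;> rintro rfl <;> abel

/-- The measurement-update intersection of a constrained zonotope
`R̃ = ⟨c̃, G̃, Ã, b̃⟩` with the set of states consistent with measurement
`y = Hx + v`, `v ∈ ⟨c_v, G_v⟩`, equals the constrained zonotope
`⟨c̃, [G̃ 0], [Ã 0; HG̃ G_v], [b̃; y − Hc̃ − c_v]⟩`. -/
theorem stmt_3 {nx ny ξt ξv nc : ℕ}
    (ct : Fin nx → ℝ) (Gt : Matrix (Fin nx) (Fin ξt) ℝ)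
    (At : Matrix (Fin nc) (Fin ξt) ℝ) (bt : Fin nc → ℝ)
    (H : Matrix (Fin ny) (Fin nx) ℝ) (y : Fin ny → ℝ)
    (cv : Fin ny → ℝ) (Gv : Matrix (Fin ny) (Fin ξv) ℝ) :
    {x : Fin nx → ℝ |
        (∃ β : Fin ξt → ℝ, (∀ i, |β i| ≤ 1) ∧ At.mulVec β = bt ∧ x = ct + Gt.mulVec β) ∧
        ∃ v : Fin ny → ℝ,
          (∃ βv : Fin ξv → ℝ, (∀ i, |βv i| ≤ 1) ∧ v = cv + Gv.mulVec βv) ∧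
          y = H.mulVec x + v} =
    {x : Fin nx → ℝ |
        ∃ β : Fin ξt ⊕ Fin ξv → ℝ, (∀ i, |β i| ≤ 1) ∧
          (Matrix.fromBlocks At 0 (H * Gt) Gv).mulVec β
            = Sum.elim bt (y - H.mulVec ct - cv) ∧
          x = ct + (Matrix.fromCols Gt (0 : Matrix (Fin nx) (Fin ξv) ℝ)).mulVec β} := by
  ext x
  simp only [Set.mem_ofPred_eq, Sum.exists_elim, Sum.forall, Sum.elim_inl, Sum.elim_inr,
    fromBlocks_zero₁₂_mulVec_sumElim, fromCols_zero_mulVec_sumElim, Sum.elim_eq_iff]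
  constructor
  · rintro ⟨⟨β, hβ, hA, rfl⟩, _, ⟨βv, hβv, rfl⟩, hy⟩
    exact ⟨β, βv, ⟨hβ, hβv⟩, ⟨hA, (measurement_eq_iff_constraint ..).1 hy⟩, rfl⟩
  · rintro ⟨β, βv, ⟨hβ, hβv⟩, ⟨hA, hy⟩, rfl⟩
    exact ⟨⟨β, hβ, hA, rfl⟩, _, ⟨βv, hβv, rfl⟩, (measurement_eq_iff_constraint ..).2 hy⟩
end

section
/- Let M = ⟨C, {G^{(1)}, …, G^{(ξ)}}⟩ be a matrix zonotope in ℝ^{n_x×m_a}, let Q̄ ∈ ℝ^{n_s×n_x}, Ȳ ∈ ℝ^{n_s×m_a}, and R̄ ∈ ℝ^{n_s×m_a}. Let Θ ∈ M satisfy the entrywise side-information bound |Q̄Θ − Ȳ| ≤ R̄ (i.e., |(Q̄Θ − Ȳ)_{ij}| ≤ R̄_{ij} for all i, j). Then Θ belongs to the constrained matrix zonotope N = ⟨C, Ḡ, A, B⟩ with ξ + n_s·m_a generators, where: the first ξ generators are G^{(1)}, …, G^{(ξ)} and the remaining n_s·m_a generators are zero matrices; the first ξ constraint matrices are A^{(i)}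 = Q̄ G^{(i)} for i = 1,…,ξ, and for each pair (i, j) with i ∈ {1,…,n_s}, j ∈ {1,…,m_a} there is an additional constraint matrix −E_i R̄ E_j, where E_i = diag(e_i) ∈ ℝ^{n_s×n_s} and E_j = diag(e_j) ∈ ℝ^{m_a×m_a} (so −E_i R̄ E_j has entry −R̄_{ij} in position (i,j) and zeros elsewhere); and B = Ȳ − Q̄ C. -/
open Matrix

/-! The coefficients of `Θ` in the zonotope are kept for the generators `G i`. For each entry,
the side information `|(QΘ - Y) i j| ≤ R i j` says that `(QΘ - Y) i j = γ * R i j` for some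
`|γ| ≤ 1`; these `γ` become the coefficients of the zero generators, and their constraint
matrices `-single i j (R i j)` add up exactly to `-(QΘ - Y)`. Together with
`∑ β i • Q G i = QΘ - QC` this gives the constraint `Y - QC`. -/

theorem exists_abs_le_one_mul_eq_of_abs_le {K : Type*} [Field K] [LinearOrder K]
    [IsStrictOrderedRing K] {x r : K} (h : |x| ≤ r) : ∃ γ : K, |γ| ≤ 1 ∧ γ * r = x := by
  rcases (abs_nonneg x).trans h |>.eq_or_lt with hr | hr
  · subst hr
    exact ⟨0, by simp, by simpa [eq_comm] using h⟩
  · refine ⟨x / r, ?_, div_mul_cancel₀ x hr.ne'⟩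
    rwa [abs_div, abs_of_pos hr, div_le_one hr]

theorem Matrix.sum_smul_single_eq_of {m n α : Type*} [Fintype m] [Fintype n] [DecidableEq m]
    [DecidableEq n] [CommSemiring α] (γ : m × n → α) (R : Matrix m n α) :
    ∑ p : m × n, γ p • single p.1 p.2 (R p.1 p.2) = of fun i j => γ (i, j) * R i j := by
  simp only [smul_single, smul_eq_mul, Fintype.sum_prod_type]
  exact sum_sum_single (of fun i j => γ (i, j) * R i j)

theorem mul_add_sum_smul {l m n α ι : Type*} [Fintype l] [Fintype m] [Fintype ι]
    [CommSemiring α] (Q : Matrix l m α) (C : Matrix m n α) (G : ι → Matrix m n α) (β : ι → α) :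
    Q * (C + ∑ i, β i • G i) = Q * C + ∑ i, β i • (Q * G i) := by
  simp only [Matrix.mul_add, Matrix.mul_sum, Matrix.mul_smul]

/-- If `Θ` belongs to the matrix zonotope `⟨C, {G^{(i)}}⟩` and
satisfies the entrywise side information `|Q̄Θ − Ȳ| ≤ R̄`, then `Θ` belongs to
the constrained matrix zonotope with center `C`, generators `G^{(i)}` followed
by `n_s · m_a` zero generators, constraint matrices `Q̄G^{(i)}` followed by
`−E_i R̄ E_j`, and offset `B = Ȳ − Q̄C`. -/
theorem stmt_11 {nx ma ns ξ : ℕ}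
    (C : Matrix (Fin nx) (Fin ma) ℝ) (G : Fin ξ → Matrix (Fin nx) (Fin ma) ℝ)
    (Q : Matrix (Fin ns) (Fin nx) ℝ) (Y R : Matrix (Fin ns) (Fin ma) ℝ)
    (Θ : Matrix (Fin nx) (Fin ma) ℝ)
    (hmem : ∃ β : Fin ξ → ℝ, (∀ i, |β i| ≤ 1) ∧ Θ = C + ∑ i, β i • G i)
    (hside : ∀ i j, |(Q * Θ - Y) i j| ≤ R i j) :
    ∃ β : Fin ξ ⊕ (Fin ns × Fin ma) → ℝ, (∀ i, |β i| ≤ 1) ∧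
      (∑ i : Fin ξ ⊕ (Fin ns × Fin ma), β i •
          (Sum.elim (fun i => Q * G i)
            (fun p : Fin ns × Fin ma =>
              -(Matrix.single p.1 p.2 (R p.1 p.2))) i)) = Y - Q * C ∧
      Θ = C + ∑ i : Fin ξ ⊕ (Fin ns × Fin ma), β i •
          (Sum.elim G (fun _ : Fin ns × Fin ma =>
            (0 : Matrix (Fin nx) (Fin ma) ℝ)) i) := by
  obtain ⟨β, hβ, rfl⟩ := hmem
  choose γ hγ hγR using fun p : Fin ns × Fin ma =>
    exists_abs_le_one_mul_eq_of_abs_le (hside p.1 p.2)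
  have hsingle : ∑ p, γ p • single p.1 p.2 (R p.1 p.2) = Q * (C + ∑ i, β i • G i) - Y := by
    rw [sum_smul_single_eq_of]
    ext i j
    exact hγR (i, j)
  refine ⟨Sum.elim β γ, Sum.forall.2 ⟨hβ, hγ⟩, ?_, ?_⟩
  · simp only [Fintype.sum_sum_type, Sum.elim_inl, Sum.elim_inr, smul_neg, Finset.sum_neg_distrib,
      hsingle, mul_add_sum_smul]
    abel
  · simp [Fintype.sum_sum_type]
end

section
/- Let C, G^{(1)}, …, G^{(ξ)} ∈ ℝ^{n_x×m_a}, Q̄ ∈ ℝ^{n_s×n_x}, Ȳ ∈ ℝ^{n_s×m_a}, and R̄ ∈ ℝ^{n_s×m_a} with R̄ entrywise nonnegative. Let N be the constrained matrix zonotope with center C, generators G^{(1)}, …, G^{(ξ)} followed by n_s·m_a zero-matrix generators, constraint matrices Q̄G^{(1)}, …, Q̄G^{(ξ)} followed by the matrices −E_i R̄ E_j for i ∈ {1,…,n_s}, j ∈ {1,…,m_a} (where E_i = diag(e_i) ∈ ℝ^{n_s×n_s} and E_j = diag(e_j) ∈ ℝ^{m_a×m_a}), and constraint offset B = Ȳ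 − Q̄C. Then every Θ ∈ N satisfies the entrywise bound |Q̄Θ − Ȳ| ≤ R̄, i.e., |(Q̄Θ − Ȳ)_{ij}| ≤ R̄_{ij} for all i, j. -/
open Matrix

/-!
Membership in the zonotope gives `Q̄Θ − Ȳ = Σ_{i,j} β_{ij} E_i R̄ E_j`: the zero generators do not
move `Θ`, while the constraint forces the image of the `G`-part under `Q̄` to differ from the offset
`Ȳ − Q̄C` by exactly this sum. Its `(i, j)` entry is `β_{ij} R̄_{ij}`, and `|β_{ij}| ≤ 1`.
-/

section

variable {α : Type*} {l m n ι κ : Type*} [Fintype l] [Fintype ι] [Fintype κ]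

theorem Matrix.sum_smul_single_eq_hadamard [CommSemiring α] [Fintype m] [Fintype n]
    [DecidableEq m] [DecidableEq n] (β : m × n → α) (R : Matrix m n α) :
    ∑ p : m × n, β p • single p.1 p.2 (R p.1 p.2) = of (fun i j => β (i, j)) ⊙ R := by
  ext i j
  simp [Matrix.sum_apply, single_apply, Fintype.sum_prod_type, ite_and]

theorem Matrix.mul_sub_eq_of_sum_elim_constraint [CommRing α] {β : ι ⊕ κ → α}
    (Q : Matrix m l α) (G : ι → Matrix l n α) (S : κ → Matrix m n α) {C Θ : Matrix l n α}
    {Y : Matrix m n α}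
    (hc : ∑ i, β i • Sum.elim (fun i => Q * G i) (fun p => -S p) i = Y - Q * C)
    (hΘ : Θ = C + ∑ i, β i • Sum.elim G (fun _ => (0 : Matrix l n α)) i) :
    Q * Θ - Y = ∑ p, β (.inr p) • S p := by
  simp only [Fintype.sum_sum_type, Sum.elim_inl, Sum.elim_inr, smul_neg, smul_zero,
    Finset.sum_const_zero, add_zero, Finset.sum_neg_distrib] at hc hΘ
  rw [hΘ, Matrix.mul_add, Matrix.mul_sum, ← eq_sub_iff_add_eq.mp hc]
  simp only [Matrix.mul_smul]
  abel

end

theorem abs_mul_le_of_abs_le_one {α : Type*} [Ring α] [LinearOrder α] [IsOrderedRing α]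
    {a r : α} (ha : |a| ≤ 1) (hr : 0 ≤ r) : |a * r| ≤ r := by
  rw [abs_mul, abs_of_nonneg hr]
  exact mul_le_of_le_one_left hr ha

/-- Every element `Θ` of the constrained matrix zonotope with
center `C`, generators `G^{(i)}` followed by zero generators, constraint
matrices `Q̄G^{(i)}` followed by `−E_i R̄ E_j`, and offset `B = Ȳ − Q̄C`,
satisfies the entrywise bound `|Q̄Θ − Ȳ| ≤ R̄` (for `R̄` entrywise
nonnegative). -/
theorem stmt_12 {nx ma ns ξ : ℕ}
    (C : Matrix (Fin nx) (Fin ma) ℝ) (G : Fin ξ → Matrix (Fin nx) (Fin ma) ℝ)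
    (Q : Matrix (Fin ns) (Fin nx) ℝ) (Y R : Matrix (Fin ns) (Fin ma) ℝ)
    (hR : ∀ i j, 0 ≤ R i j)
    (Θ : Matrix (Fin nx) (Fin ma) ℝ)
    (hmem : ∃ β : Fin ξ ⊕ (Fin ns × Fin ma) → ℝ, (∀ i, |β i| ≤ 1) ∧
      (∑ i : Fin ξ ⊕ (Fin ns × Fin ma), β i •
          (Sum.elim (fun i => Q * G i)
            (fun p : Fin ns × Fin ma =>
              -(Matrix.single p.1 p.2 (R p.1 p.2))) i)) = Y - Q * C ∧
      Θ = C + ∑ i : Fin ξ ⊕ (Fin ns × Fin ma), β i •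
          (Sum.elim G (fun _ : Fin ns × Fin ma =>
            (0 : Matrix (Fin nx) (Fin ma) ℝ)) i)) :
    ∀ i j, |(Q * Θ - Y) i j| ≤ R i j := by
  obtain ⟨β, hβ, hc, hΘ⟩ := hmem
  intro i j
  rw [Matrix.mul_sub_eq_of_sum_elim_constraint Q G _ hc hΘ, Matrix.sum_smul_single_eq_hadamard,
    hadamard_apply, of_apply]
  exact abs_mul_le_of_abs_le_one (hβ _) (hR i j)
end
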